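/- Let f ∈ L^q([0,1]^n) with 1 < p < ∞, q = p/(p−1). If ∫ f φ dξ = 0 for all φ ∈ L^p([0,1]^n) whose marginals all vanish, then f(ξ) = Σ_{i=1}^n f_i(ξ_i) − (n−1)∫ f dξ almost everywhere, i.e. f is a.e. a sum of functions of the single variables ξ_i. -/

import Mathlib

open MeasureTheory

noncomputable def lineMeasure : Measure ℝ := volume.restrict (Set.Icc (0:ℝ) 1)

noncomputable def cubeMeasure (n : ℕ) : Measure (Fin n → ℝ) :=
  Measure.pi fun _ => lineMeasure

noncomputable def marginal {n : ℕ} (g : (Fin n → ℝ) → ℝ) (i : Fin n) (x : ℝ) : ℝ :=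
  ∫ ξ, g (Function.update ξ i x) ∂(cubeMeasure n)

instance : IsProbabilityMeasure lineMeasure :=
  ⟨by simp [lineMeasure, Real.volume_Icc]⟩

instance (n : ℕ) : IsProbabilityMeasure (cubeMeasure n) := by
  unfold cubeMeasure; infer_instance

lemma mp_update {n : ℕ} (i : Fin n) :
    MeasurePreserving (fun p : (Fin n → ℝ) × ℝ => Function.update p.1 i p.2)
      ((cubeMeasure n).prod lineMeasure) (cubeMeasure n) := by
  refine ⟨measurable_update', ?_⟩
  refine (Measure.pi_eq fun s hs => ?_).symm
  rw [Measure.map_apply measurable_update' (MeasurableSet.univ_pi hs)]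
  have hpre : (fun p : (Fin n → ℝ) × ℝ => Function.update p.1 i p.2) ⁻¹' (Set.pi Set.univ s)
      = (Set.pi Set.univ (Function.update s i Set.univ)) ×ˢ (s i) := by
    ext ⟨ξ, x⟩
    simp only [Set.mem_preimage, Set.mem_pi, Set.mem_univ, forall_true_left, Set.mem_prod]
    constructor
    · intro h
      refine ⟨fun j => ?_, by simpa using h i⟩
      rcases eq_or_ne j i with rfl | hj
      · simp
      · rw [Function.update_of_ne hj]
        simpa [Function.update_of_ne hj] using h j
    · rintro ⟨h1, h2⟩ j
      rcases eq_or_ne j i with rfl | hj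
      · simpa using h2
      · have := h1 j
        rw [Function.update_of_ne hj] at this
        simpa [Function.update_of_ne hj] using this
  rw [hpre, Measure.prod_prod]
  unfold cubeMeasure
  rw [Measure.pi_pi]
  rw [← Finset.prod_erase_mul _ _ (Finset.mem_univ i),
      ← Finset.prod_erase_mul _ _ (Finset.mem_univ i)]
  simp only [Function.update_self, measure_univ, mul_one]
  refine congrArg (· * lineMeasure (s i)) (Finset.prod_congr rfl fun j hj => ?_)
  rw [Function.update_of_ne (Finset.ne_of_mem_erase hj)]

variable {n : ℕ}

lemma integrable_update_comp {g : (Fin n → ℝ) → ℝ} (hg : Integrable g (cubeMeasure n)) (i : Fin n) :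
    Integrable (fun p : (Fin n → ℝ) × ℝ => g (Function.update p.1 i p.2))
      ((cubeMeasure n).prod lineMeasure) :=
  ((mp_update i).integrable_comp hg.aestronglyMeasurable).mpr hg

lemma fubini_marginal {g : (Fin n → ℝ) → ℝ} (hg : Integrable g (cubeMeasure n)) (i : Fin n) :
    ∫ ξ, g ξ ∂(cubeMeasure n) = ∫ x, marginal g i x ∂lineMeasure := by
  rw [← (mp_update i).map_eq,
    integral_map (mp_update i).measurable.aemeasurable
      (by rw [(mp_update i).map_eq]; exact hg.aestronglyMeasurable)]
  exact integral_prod_symm _ (integrable_update_comp hg i)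

lemma integrable_marginal {g : (Fin n → ℝ) → ℝ} (hg : Integrable g (cubeMeasure n)) (i : Fin n) :
    Integrable (marginal g i) lineMeasure :=
  (integrable_update_comp hg i).integral_prod_right

lemma ae_integrable_update {g : (Fin n → ℝ) → ℝ} (hg : Integrable g (cubeMeasure n)) (i : Fin n) :
    ∀ᵐ x ∂lineMeasure, Integrable (fun ξ => g (Function.update ξ i x)) (cubeMeasure n) :=
  (integrable_update_comp hg i).prod_left_ae

lemma mp_eval (i : Fin n) :
    MeasurePreserving (fun ξ : Fin n → ℝ => ξ i) (cubeMeasure n) lineMeasure := by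
  have h1 : (fun ξ : Fin n → ℝ => ξ i) ∘
      (fun p : (Fin n → ℝ) × ℝ => Function.update p.1 i p.2) = Prod.snd := by
    funext p; simp
  have h2 := (mp_update (n := n) i)
  refine ⟨measurable_pi_apply i, ?_⟩
  rw [← h2.map_eq, Measure.map_map (measurable_pi_apply i) h2.measurable, h1,
    Measure.map_snd_prod, measure_univ, one_smul]

lemma integrable_eval_comp {h : ℝ → ℝ} (hh : Integrable h lineMeasure) (i : Fin n) :
    Integrable (fun ξ : Fin n → ℝ => h (ξ i)) (cubeMeasure n) :=
  ((mp_eval i).integrable_comp hh.aestronglyMeasurable).mpr hh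

lemma integral_eval_comp {h : ℝ → ℝ} (hh : AEStronglyMeasurable h lineMeasure) (i : Fin n) :
    ∫ ξ, h (ξ i) ∂(cubeMeasure n) = ∫ x, h x ∂lineMeasure := by
  rw [← (mp_eval i).map_eq, integral_map (measurable_pi_apply i).aemeasurable
    (by rw [(mp_eval i).map_eq]; exact hh)]

lemma marginal_eval_self (h : ℝ → ℝ) (i : Fin n) (x : ℝ) :
    marginal (fun ξ => h (ξ i)) i x = h x := by
  unfold marginal
  simp [Function.update_self]

lemma marginal_eval_ne (h : ℝ → ℝ) {i j : Fin n} (hij : j ≠ i) (x : ℝ) :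
    marginal (fun ξ => h (ξ j)) i x = ∫ ξ, h (ξ j) ∂(cubeMeasure n) := by
  unfold marginal
  congr 1
  funext η
  simp only []
  rw [Function.update_of_ne hij]

lemma marginal_const (c : ℝ) (i : Fin n) (x : ℝ) :
    marginal (fun _ => c) i x = c := by
  unfold marginal; simp

lemma pairing {u : (Fin n → ℝ) → ℝ} (v : ℝ → ℝ) (i : Fin n)
    (huv : Integrable (fun ξ => u ξ * v (ξ i)) (cubeMeasure n)) :
    ∫ ξ, u ξ * v (ξ i) ∂(cubeMeasure n) = ∫ x, marginal u i x * v x ∂lineMeasure := by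
  rw [fubini_marginal huv i]
  refine integral_congr_ae (Filter.Eventually.of_forall fun x => ?_)
  unfold marginal
  simp only [Function.update_self]
  exact integral_mul_const _ _

/-- The projection onto the orthogonal complement of single-variable functions. -/
noncomputable def proj (u : (Fin n → ℝ) → ℝ) : (Fin n → ℝ) → ℝ :=
  fun ξ => u ξ - (∑ i : Fin n, marginal u i (ξ i))
    + ((n : ℝ) - 1) * ∫ η, u η ∂(cubeMeasure n)

lemma integrable_marginal_eval {u : (Fin n → ℝ) → ℝ} (hu : Integrable u (cubeMeasure n))
    (j : Fin n) : Integrable (fun ξ : Fin n → ℝ => marginal u j (ξ j)) (cubeMeasure n) :=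
  integrable_eval_comp (integrable_marginal hu j) j

lemma integral_marginal_eval {u : (Fin n → ℝ) → ℝ} (hu : Integrable u (cubeMeasure n))
    (j : Fin n) :
    ∫ ξ, marginal u j (ξ j) ∂(cubeMeasure n) = ∫ η, u η ∂(cubeMeasure n) := by
  rw [integral_eval_comp (integrable_marginal hu j).aestronglyMeasurable j,
    ← fubini_marginal hu j]

lemma integrable_sum_marginal {u : (Fin n → ℝ) → ℝ} (hu : Integrable u (cubeMeasure n)) :
    Integrable (fun ξ : Fin n → ℝ => ∑ j : Fin n, marginal u j (ξ j)) (cubeMeasure n) :=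
  integrable_finset_sum _ fun j _ => integrable_marginal_eval hu j

lemma integrable_proj {u : (Fin n → ℝ) → ℝ} (hu : Integrable u (cubeMeasure n)) :
    Integrable (proj u) (cubeMeasure n) :=
  (hu.sub (integrable_sum_marginal hu)).add (integrable_const _)

lemma integral_proj {u : (Fin n → ℝ) → ℝ} (hu : Integrable u (cubeMeasure n)) :
    ∫ ξ, proj u ξ ∂(cubeMeasure n) = 0 := by
  unfold proj
  have h1 : Integrable (fun ξ : Fin n → ℝ => u ξ - ∑ j : Fin n, marginal u j (ξ j))
      (cubeMeasure n) := hu.sub (integrable_sum_marginal hu)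
  rw [integral_add h1 (integrable_const _),
    integral_sub hu (integrable_sum_marginal hu),
    integral_finset_sum _ fun j _ => integrable_marginal_eval hu j, integral_const]
  simp only [measure_univ, probReal_univ, ENNReal.toReal_one, one_smul]
  have : ∀ j : Fin n, ∫ ξ, marginal u j (ξ j) ∂(cubeMeasure n) = ∫ η, u η ∂(cubeMeasure n) :=
    fun j => integral_marginal_eval hu j
  rw [Finset.sum_congr rfl fun j _ => this j, Finset.sum_const, Finset.card_univ,
    Fintype.card_fin, nsmul_eq_mul]
  ring

lemma marginal_proj {u : (Fin n → ℝ) → ℝ} (hu : Integrable u (cubeMeasure n)) (i : Fin n) :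
    marginal (proj u) i =ᵐ[lineMeasure] 0 := by
  have hn1 : 1 ≤ n := i.pos
  set c := ∫ η, u η ∂(cubeMeasure n) with hc
  filter_upwards [ae_integrable_update hu i] with x hx
  have hsum : Integrable
      (fun η : Fin n → ℝ => ∑ j : Fin n, marginal u j (Function.update η i x j))
      (cubeMeasure n) := by
    refine integrable_finset_sum _ fun j _ => ?_
    rcases eq_or_ne j i with rfl | hj
    · simpa [Function.update_self] using
        (integrable_const (marginal u j x) : Integrable _ (cubeMeasure n))
    · have : (fun η : Fin n → ℝ => marginal u j (Function.update η i x j))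
          = fun η => marginal u j (η j) := by
        funext η; rw [Function.update_of_ne hj]
      rw [this]; exact integrable_marginal_eval hu j
  have key : ∀ j : Fin n,
      ∫ η, marginal u j (Function.update η i x j) ∂(cubeMeasure n)
        = if j = i then marginal u i x else c := by
    intro j
    rcases eq_or_ne j i with rfl | hj
    · simp [Function.update_self]
    · rw [if_neg hj]
      have : (fun η : Fin n → ℝ => marginal u j (Function.update η i x j))
          = fun η => marginal u j (η j) := by
        funext η; rw [Function.update_of_ne hj]
      rw [this, integral_marginal_eval hu j]
  show marginal (proj u) i x = 0
  unfold marginal proj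
  have h1 : Integrable (fun η : Fin n → ℝ =>
      u (Function.update η i x) - ∑ j : Fin n, marginal u j (Function.update η i x j))
      (cubeMeasure n) := hx.sub hsum
  rw [integral_add h1 (integrable_const _), integral_sub hx hsum,
    integral_finset_sum _ (fun j _ => by
      rcases eq_or_ne j i with rfl | hj
      · simpa [Function.update_self] using
          (integrable_const (marginal u j x) : Integrable _ (cubeMeasure n))
      · have : (fun η : Fin n → ℝ => marginal u j (Function.update η i x j))
            = fun η => marginal u j (η j) := by
          funext η; rw [Function.update_of_ne hj]
        rw [this]; exact integrable_marginal_eval hu j),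
    integral_const]
  simp only [measure_univ, probReal_univ, ENNReal.toReal_one, one_smul]
  rw [Finset.sum_congr rfl fun j _ => key j]
  have hsum2 : ∑ j : Fin n, (if j = i then marginal u i x else c)
      = marginal u i x + ((n : ℝ) - 1) * c := by
    rw [← Finset.add_sum_erase _ _ (Finset.mem_univ i), if_pos rfl,
      Finset.sum_congr rfl fun j hj => if_neg (Finset.ne_of_mem_erase hj),
      Finset.sum_const, Finset.card_erase_of_mem (Finset.mem_univ i), Finset.card_univ,
      Fintype.card_fin, nsmul_eq_mul, Nat.cast_sub hn1]
    push_cast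
    ring
  rw [hsum2]
  have hM : ∫ a, u (Function.update a i x) ∂(cubeMeasure n) = marginal u i x := rfl
  rw [hM, ← hc]
  ring


theorem stmt5 (n : ℕ) (hn : 2 ≤ n) (p q : ℝ) (hp : 1 < p) (hq : q = p / (p - 1))
    (f : (Fin n → ℝ) → ℝ) (hf : MemLp f (ENNReal.ofReal q) (cubeMeasure n))
    (horth : ∀ φ : (Fin n → ℝ) → ℝ, MemLp φ (ENNReal.ofReal p) (cubeMeasure n) →
      (∀ i : Fin n, marginal φ i =ᵐ[lineMeasure] 0) →
      ∫ ξ, f ξ * φ ξ ∂(cubeMeasure n) = 0) :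
    f =ᵐ[cubeMeasure n]
      (fun ξ => (∑ i : Fin n, marginal f i (ξ i))
        - ((n : ℝ) - 1) * ∫ η, f η ∂(cubeMeasure n)) := by
  have hq1 : 1 ≤ q := by
    rw [hq, le_div_iff₀ (by linarith)]; linarith
  have hfInt : Integrable f (cubeMeasure n) :=
    hf.integrable (ENNReal.one_le_ofReal.mpr hq1)
  set c := ∫ η, f η ∂(cubeMeasure n) with hc
  set g := proj f with hgdef
  have hgInt : Integrable g (cubeMeasure n) := integrable_proj hfInt
  have hgmarg : ∀ i, marginal g i =ᵐ[lineMeasure] 0 := marginal_proj hfInt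
  have hgint0 : ∫ ξ, g ξ ∂(cubeMeasure n) = 0 := integral_proj hfInt
  have comm : ∀ a b : (Fin n → ℝ) → ℝ, (fun ξ => a ξ * b ξ) = fun ξ => b ξ * a ξ :=
    fun a b => funext fun ξ => mul_comm _ _
  have key : ∀ s : Set (Fin n → ℝ), MeasurableSet s →
      ∫ ξ in s, g ξ ∂(cubeMeasure n) = 0 := by
    intro s hs
    set ψ : (Fin n → ℝ) → ℝ := s.indicator fun _ => 1 with hψdef
    have hψm : AEStronglyMeasurable ψ (cubeMeasure n) :=
      (measurable_const.indicator hs).aestronglyMeasurable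
    have hψb : ∀ ξ, ‖ψ ξ‖ ≤ 1 := by
      intro ξ; rw [hψdef]
      by_cases h : ξ ∈ s <;> simp [Set.indicator_apply, h]
    have hψInt : Integrable ψ (cubeMeasure n) := (integrable_const (1:ℝ)).indicator hs
    have hmb : ∀ (j : Fin n) (x : ℝ), ‖marginal ψ j x‖ ≤ 1 := by
      intro j x
      have := norm_integral_le_of_norm_le_const (μ := cubeMeasure n)
        (f := fun ξ => ψ (Function.update ξ j x)) (C := 1)
        (Filter.Eventually.of_forall fun ξ => hψb _)
      simpa [marginal, measure_univ] using this
    set φ := proj ψ with hφdef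
    have hIb : ‖∫ ξ, ψ ξ ∂(cubeMeasure n)‖ ≤ 1 := by
      have := norm_integral_le_of_norm_le_const (μ := cubeMeasure n) (f := ψ) (C := 1)
        (Filter.Eventually.of_forall hψb)
      simpa [measure_univ] using this
    have hφb : ∀ ξ, ‖φ ξ‖ ≤ 1 + n + n := by
      intro ξ
      rw [hφdef]
      unfold proj
      have h1 : ‖∑ j : Fin n, marginal ψ j (ξ j)‖ ≤ (n : ℝ) := by
        calc ‖∑ j : Fin n, marginal ψ j (ξ j)‖ ≤ ∑ j : Fin n, ‖marginal ψ j (ξ j)‖ :=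
              norm_sum_le _ _
        _ ≤ ∑ _j : Fin n, (1:ℝ) := Finset.sum_le_sum fun j _ => hmb j _
        _ = (n : ℝ) := by simp
      have h2 : ‖((n : ℝ) - 1) * ∫ η, ψ η ∂(cubeMeasure n)‖ ≤ (n : ℝ) := by
        rw [norm_mul]
        calc ‖(n : ℝ) - 1‖ * ‖∫ η, ψ η ∂(cubeMeasure n)‖ ≤ ‖(n : ℝ) - 1‖ * 1 := by
              exact mul_le_mul_of_nonneg_left hIb (norm_nonneg _)
        _ ≤ (n : ℝ) := by
              have hn' : (1:ℝ) ≤ (n : ℝ) := by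
                have : (1:ℕ) ≤ n := le_trans one_le_two hn
                exact_mod_cast this
              rw [mul_one, Real.norm_eq_abs, abs_sub_le_iff]
              constructor <;> linarith
      calc ‖ψ ξ - (∑ j : Fin n, marginal ψ j (ξ j))
            + ((n : ℝ) - 1) * ∫ η, ψ η ∂(cubeMeasure n)‖
          ≤ ‖ψ ξ - (∑ j : Fin n, marginal ψ j (ξ j))‖
            + ‖((n : ℝ) - 1) * ∫ η, ψ η ∂(cubeMeasure n)‖ := norm_add_le _ _
        _ ≤ (‖ψ ξ‖ + ‖∑ j : Fin n, marginal ψ j (ξ j)‖)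
            + ‖((n : ℝ) - 1) * ∫ η, ψ η ∂(cubeMeasure n)‖ := by
              exact add_le_add_left (norm_sub_le _ _) _
        _ ≤ (1 + n) + n := by
              refine add_le_add (add_le_add (hψb ξ) h1) h2
        _ = 1 + n + n := by ring
    have hsumm : AEStronglyMeasurable
        (fun ξ : Fin n → ℝ => ∑ j : Fin n, marginal ψ j (ξ j)) (cubeMeasure n) :=
      Finset.aestronglyMeasurable_fun_sum _ fun j _ =>
        ((integrable_marginal hψInt j).aestronglyMeasurable).comp_quasiMeasurePreserving
          (mp_eval j).quasiMeasurePreserving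
    have hφm : AEStronglyMeasurable φ (cubeMeasure n) := by
      rw [hφdef]
      exact ((hψm.sub hsumm).add aestronglyMeasurable_const : AEStronglyMeasurable
        (fun ξ => ψ ξ - (∑ j : Fin n, marginal ψ j (ξ j))
          + ((n : ℝ) - 1) * ∫ η, ψ η ∂(cubeMeasure n)) (cubeMeasure n))
    have hφLp : MemLp φ (ENNReal.ofReal p) (cubeMeasure n) :=
      MemLp.of_bound hφm _ (Filter.Eventually.of_forall hφb)
    have hφmarg : ∀ i, marginal φ i =ᵐ[lineMeasure] 0 := marginal_proj hψInt
    have hφInt : Integrable φ (cubeMeasure n) := integrable_proj hψInt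
    have hφint0 : ∫ ξ, φ ξ ∂(cubeMeasure n) = 0 := integral_proj hψInt
    have hφbdd : ∃ C, ∀ ξ, ‖φ ξ‖ ≤ C := ⟨_, hφb⟩
    -- Step 2 : ∫ g φ = 0
    have step2 : ∫ ξ, g ξ * φ ξ ∂(cubeMeasure n) = 0 := by
      have hexp : (fun ξ => g ξ * φ ξ)
          = fun ξ => f ξ * φ ξ - (∑ j : Fin n, marginal f j (ξ j) * φ ξ)
            + (((n : ℝ) - 1) * c) * φ ξ := by
        funext ξ
        rw [hgdef]
        unfold proj
        rw [← Finset.sum_mul, ← hc]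
        ring
      have hint1 : Integrable (fun ξ => f ξ * φ ξ) (cubeMeasure n) := by
        rw [comm]; exact hfInt.bdd_mul hφm (Filter.Eventually.of_forall hφb)
      have hint2 : ∀ j : Fin n, Integrable (fun ξ => marginal f j (ξ j) * φ ξ)
          (cubeMeasure n) := by
        intro j
        rw [comm]; exact (integrable_marginal_eval hfInt j).bdd_mul hφm (Filter.Eventually.of_forall hφb)
      have hint2' : Integrable (fun ξ => ∑ j : Fin n, marginal f j (ξ j) * φ ξ)
          (cubeMeasure n) := integrable_finset_sum _ fun j _ => hint2 j
      have hint3 : Integrable (fun ξ => (((n : ℝ) - 1) * c) * φ ξ) (cubeMeasure n) :=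
        hφInt.const_mul _
      have hsub : Integrable (fun ξ => f ξ * φ ξ
          - ∑ j : Fin n, marginal f j (ξ j) * φ ξ) (cubeMeasure n) := hint1.sub hint2'
      rw [hexp, integral_add hsub hint3, integral_sub hint1 hint2',
        integral_finset_sum _ fun j _ => hint2 j]
      have e1 : ∫ ξ, f ξ * φ ξ ∂(cubeMeasure n) = 0 := horth φ hφLp hφmarg
      have e2 : ∀ j : Fin n, ∫ ξ, marginal f j (ξ j) * φ ξ ∂(cubeMeasure n) = 0 := by
        intro j
        rw [comm]
        rw [pairing (marginal f j) j (by rw [comm]; exact hint2 j)]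
        refine integral_eq_zero_of_ae ?_
        filter_upwards [hφmarg j] with x hx
        simp [hx]
      have e3 : ∫ ξ, (((n : ℝ) - 1) * c) * φ ξ ∂(cubeMeasure n) = 0 := by
        rw [integral_const_mul, hφint0, mul_zero]
      rw [e1, Finset.sum_congr rfl fun j _ => e2 j, e3, Finset.sum_const]
      simp
    -- Step 1 : ∫ g ψ = ∫ g φ
    have step1 : ∫ ξ, g ξ * ψ ξ ∂(cubeMeasure n) = 0 := by
      have hexp : (fun ξ => g ξ * φ ξ)
          = fun ξ => g ξ * ψ ξ - (∑ j : Fin n, g ξ * marginal ψ j (ξ j))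
            + g ξ * (((n : ℝ) - 1) * ∫ η, ψ η ∂(cubeMeasure n)) := by
        funext ξ
        rw [hφdef]
        unfold proj
        rw [← Finset.mul_sum]
        ring
      have hint1 : Integrable (fun ξ => g ξ * ψ ξ) (cubeMeasure n) := by
        rw [comm]; exact hgInt.bdd_mul hψm (Filter.Eventually.of_forall hψb)
      have hint2 : ∀ j : Fin n, Integrable (fun ξ => g ξ * marginal ψ j (ξ j))
          (cubeMeasure n) := fun j =>
        hgInt.bdd_mul ((integrable_marginal_eval hψInt j).aestronglyMeasurable)
          (Filter.Eventually.of_forall fun ξ => hmb j _) |>.congr (Filter.Eventually.of_forall fun ξ => mul_comm _ _)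
      have hint2' : Integrable (fun ξ => ∑ j : Fin n, g ξ * marginal ψ j (ξ j))
          (cubeMeasure n) := integrable_finset_sum _ fun j _ => hint2 j
      have hint3 : Integrable (fun ξ => g ξ * (((n : ℝ) - 1) * ∫ η, ψ η ∂(cubeMeasure n)))
          (cubeMeasure n) := hgInt.mul_const _
      have e2 : ∀ j : Fin n, ∫ ξ, g ξ * marginal ψ j (ξ j) ∂(cubeMeasure n) = 0 := by
        intro j
        rw [pairing (marginal ψ j) j (hint2 j)]
        refine integral_eq_zero_of_ae ?_
        filter_upwards [hgmarg j] with x hx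
        simp [hx]
      have e3 : ∫ ξ, g ξ * (((n : ℝ) - 1) * ∫ η, ψ η ∂(cubeMeasure n)) ∂(cubeMeasure n) = 0 := by
        rw [integral_mul_const, hgint0, zero_mul]
      have := step2
      have hsub : Integrable (fun ξ => g ξ * ψ ξ
          - ∑ j : Fin n, g ξ * marginal ψ j (ξ j)) (cubeMeasure n) := hint1.sub hint2'
      rw [hexp, integral_add hsub hint3, integral_sub hint1 hint2',
        integral_finset_sum _ fun j _ => hint2 j,
        Finset.sum_congr rfl fun j _ => e2 j, e3, Finset.sum_const] at this
      simpa using this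
    have hind : (fun ξ => g ξ * ψ ξ) = s.indicator g := by
      funext ξ
      rw [hψdef]
      by_cases h : ξ ∈ s <;> simp [Set.indicator_apply, h]
    rw [← integral_indicator hs, ← hind]
    exact step1
  have hgzero : g =ᵐ[cubeMeasure n] 0 :=
    ae_eq_zero_of_forall_setIntegral_eq_of_sigmaFinite
      (fun s _ _ => hgInt.integrableOn)
      (fun s hs _ => key s hs)
  filter_upwards [hgzero] with ξ hξ
  have h0 : proj f ξ = 0 := hξ
  unfold proj at h0
  rw [← hc] at h0
  show f ξ = ∑ i : Fin n, marginal f i (ξ i) - ((n : ℝ) - 1) * c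
  linarith
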